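/- Let p be a prime, n a positive integer, and k an integer with 0 ≤ k ≤ n−1. The polynomial x^k·(1 − x^{φ(p^n)}) in Z_{p^n}[x], where φ(p^n) = p^n − p^{n−1}, represents the function u_k : Z_{p^n} → Z_{p^n}; that is, for every x in Z_{p^n}, the evaluation of x^k·(1 − x^{φ(p^n)}) at x equals x^k if p divides x and equals 0 if p does not divide x. -/

import Mathlib

/-! Units of `ZMod (p ^ n)` are exactly the residues not divisible by `p`. On units Euler's
theorem gives `x ^ φ(p ^ n) = 1`, so the polynomial vanishes. A multiple of `p` is nilpotent of
index at most `n ≤ φ(p ^ n)`, so `x ^ φ(p ^ n) = 0` and the polynomial evaluates to `x ^ k`. -/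

open Nat Polynomial

theorem Nat.totient_prime_pow_eq_sub {p n : ℕ} (hp : p.Prime) (hn : 0 < n) :
    φ (p ^ n) = p ^ n - p ^ (n - 1) := by
  rw [totient_prime_pow hp hn, Nat.mul_sub_one, ← pow_succ, Nat.sub_add_cancel hn]

theorem Nat.le_totient_prime_pow {p : ℕ} (hp : p.Prime) (n : ℕ) : n ≤ φ (p ^ n) := by
  rcases n with _ | n
  · exact Nat.zero_le _
  rw [totient_prime_pow_succ hp]
  calc n + 1 ≤ p ^ n := Nat.lt_pow_self hp.one_lt
    _ ≤ p ^ n * (p - 1) := Nat.le_mul_of_pos_right _ (Nat.sub_pos_of_lt hp.one_lt)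

theorem pow_eq_zero_of_dvd_of_pow_eq_zero {M : Type*} [CommMonoidWithZero M] {a x : M} {n m : ℕ}
    (hax : a ∣ x) (ha : a ^ n = 0) (hnm : n ≤ m) : x ^ m = 0 :=
  zero_dvd_iff.mp (pow_eq_zero_of_le hnm ha ▸ pow_dvd_pow_of_dvd hax m)

namespace ZMod

theorem pow_totient_of_isUnit {m : ℕ} {x : ZMod m} (hx : IsUnit x) : x ^ φ m = 1 := by
  rw [← hx.unit_spec, ← Units.val_pow_eq_pow_val, pow_totient, Units.val_one]

theorem isUnit_of_notMem_span_prime {p n : ℕ} (hp : p.Prime) {x : ZMod (p ^ n)}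
    (hx : x ∉ Ideal.span {(p : ZMod (p ^ n))}) : IsUnit x := by
  have : NeZero (p ^ n) := ⟨pow_ne_zero n hp.ne_zero⟩
  rw [← natCast_zmod_val x, isUnit_iff_coprime]
  refine Coprime.pow_right n ((Nat.Prime.coprime_iff_not_dvd hp).mpr fun hdvd => hx ?_).symm
  rw [Ideal.mem_span_singleton, ← natCast_zmod_val x]
  exact Nat.cast_dvd_cast hdvd

theorem pow_totient_eq_zero_of_mem_span_prime {p n : ℕ} (hp : p.Prime) {x : ZMod (p ^ n)}
    (hx : x ∈ Ideal.span {(p : ZMod (p ^ n))}) : x ^ φ (p ^ n) = 0 :=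
  pow_eq_zero_of_dvd_of_pow_eq_zero (Ideal.mem_span_singleton.mp hx)
    (by rw [← Nat.cast_pow, natCast_self]) (le_totient_prime_pow hp n)

end ZMod

open scoped Classical in
theorem poly_for_uk_general (p n k : ℕ) (hp : p.Prime) (hn : 0 < n) :
    ∀ x : ZMod (p ^ n),
      (Polynomial.X ^ k * (1 - Polynomial.X ^ (p ^ n - p ^ (n - 1))) :
          Polynomial (ZMod (p ^ n))).eval x =
        if x ∈ Ideal.span {(p : ZMod (p ^ n))} then x ^ k else 0 := by
  intro x
  rw [← totient_prime_pow_eq_sub hp hn]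
  simp only [eval_mul, eval_pow, eval_sub, eval_one, eval_X]
  split_ifs with hx
  · rw [ZMod.pow_totient_eq_zero_of_mem_span_prime hp hx, sub_zero, mul_one]
  · rw [ZMod.pow_totient_of_isUnit (ZMod.isUnit_of_notMem_span_prime hp hx), sub_self, mul_zero]

open scoped Classical in
theorem poly_for_uk (p n k : ℕ) (hp : p.Prime) (hn : 0 < n) (hk : k ≤ n - 1) :
    ∀ x : ZMod (p ^ n),
      (Polynomial.X ^ k * (1 - Polynomial.X ^ (p ^ n - p ^ (n - 1))) :
          Polynomial (ZMod (p ^ n))).eval x =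
        if x ∈ Ideal.span {(p : ZMod (p ^ n))} then x ^ k else 0 :=
  poly_for_uk_general p n k hp hn
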